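/- Consider a finite state space Fin N (N ≥ 1), a nonempty finite action set A s for each state s, nonnegative costs c : (s : Fin N) → A s → ℝ, an estimated substochastic transition function P̂ : (s : Fin N) → A s → Fin N → ℝ (P̂ s a s' ≥ 0 and ∑_{s'} P̂ s a s' ≤ 1), and radii ε : (s : Fin N) → A s → ℝ with ε s a ≥ 0. Define the operator Û^{†,0} by (Û^{†,0} x) s = min_{a ∈ A s} (c s a + max(∑_{s'} P̂ s a s' · x s' − ε s a · (max_{s''} x s''), 0)). Suppose Ĵ : Fin N → ℝ is nonnegative and satisfies, for every s, Ĵ s = min_{a ∈ A s} (c s a + inf {∑_{s'} P̃ s' · Ĵ s' | P̃ : Fin N → ℝ, P̃ ≥ 0, ∑_{s'} P̃ s' ≤ 1, ∑_{s'} |P̃ s' − P̂ s a s'| ≤ ε s a}). Then Û^{†,0} has a fixed point x with min_{a ∈ A s} c s a ≤ x s ≤ Ĵ s for every s. -/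

import Mathlib

open Set NNReal

/-! Write `Û^{†,0} x = F x (max x)`, where `F x t` is nonexpansive in `x` for the sup norm and
Lipschitz in `t`. For `|γ| < 1` the maps `x ↦ proj (γ • F x t)`, with `proj` the clamp onto the
box `[min_a c, Ĵ]`, are contractions whose fixed points depend continuously on `t`, so the
intermediate value theorem yields one with `t = max x`. These are approximate fixed points of
`proj ∘ Û^{†,0}` with defect `O(1 - γ)`; by compactness of the box that map has an exact fixed
point, and since `Û^{†,0}` maps the box into itself (the inflated bonus is a lower bound for
`CB_min`), the clamp is inactive there. This replaces Brouwer's theorem. -/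

theorem abs_ciInf_sub_ciInf_le {ι : Type*} [Finite ι] [Nonempty ι] {f g : ι → ℝ} {δ : ℝ}
    (h : ∀ i, |f i - g i| ≤ δ) : |(⨅ i, f i) - ⨅ i, g i| ≤ δ := by
  have key : ∀ f g : ι → ℝ, (∀ i, f i - g i ≤ δ) → (⨅ i, f i) - ⨅ i, g i ≤ δ := by
    intro f g hfg
    suffices (⨅ i, f i) - δ ≤ ⨅ i, g i by linarith
    exact le_ciInf fun i => by linarith [ciInf_le (Finite.bddBelow_range f) i, hfg i]
  exact abs_sub_le_iff.2 ⟨key f g fun i => (abs_le.1 (h i)).2,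
    key g f fun i => by linarith [(abs_le.1 (h i)).1]⟩

theorem continuous_ciSup_apply {ι : Type*} [Fintype ι] [Nonempty ι] :
    Continuous fun x : ι → ℝ => ⨆ i, x i := by
  simp_rw [← Finset.sup'_univ_eq_ciSup]
  exact Continuous.finset_sup'_apply _ fun i _ => continuous_apply i

theorem IsCompact.exists_fixedPoint_of_forall_dist_le {X : Type*} [MetricSpace X] {K : Set X}
    (hK : IsCompact K) {T : X → X} (hT : ContinuousOn T K)
    (happrox : ∀ δ > 0, ∃ x ∈ K, dist (T x) x ≤ δ) : ∃ x ∈ K, T x = x := by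
  obtain ⟨x₀, hx₀, -⟩ := happrox 1 one_pos
  obtain ⟨x, hx, hmin⟩ := hK.exists_isMinOn ⟨x₀, hx₀⟩
    (continuous_dist.comp_continuousOn (hT.prodMk continuousOn_id))
  refine ⟨x, hx, dist_eq_zero.1 (le_antisymm (le_of_forall_pos_le_add fun δ hδ => ?_)
    dist_nonneg)⟩
  obtain ⟨y, hy, hyδ⟩ := happrox δ hδ
  simpa using (hmin hy).trans hyδ

theorem exists_fixedPoint_of_contractingWith_of_lipschitzWith {X : Type*} [MetricSpace X]
    [CompleteSpace X] [Nonempty X] {K L : ℝ≥0} {Φ : ℝ → X → X}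
    (hΦ : ∀ t, ContractingWith K (Φ t)) (hΦt : ∀ x, LipschitzWith L (Φ · x))
    {σ : X → ℝ} (hσ : Continuous σ) {a b : ℝ} (hσab : ∀ t x, σ (Φ t x) ∈ Icc a b) :
    ∃ x, Φ (σ x) x = x := by
  set p : ℝ → X := fun t => ContractingWith.fixedPoint (Φ t) (hΦ t)
  have hp : ∀ t, Φ t (p t) = p t := fun t => (hΦ t).fixedPoint_isFixedPt
  have hp_cont : Continuous p := by
    refine (LipschitzWith.of_dist_le' (K := L / (1 - K)) fun t t' => ?_).continuous
    rw [div_mul_eq_mul_div]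
    exact (hΦ t).dist_fixedPoint_fixedPoint_of_dist_le' (Φ t') (hp t) (hp t')
      fun x => (hΦt x).dist_le_mul t t'
  have hσp : ∀ t, σ (p t) ∈ Icc a b := fun t => hp t ▸ hσab t (p t)
  have hab : a ≤ b := (hσp 0).1.trans (hσp 0).2
  obtain ⟨t, -, ht⟩ := intermediate_value_Icc' hab
    ((hσ.comp hp_cont).sub continuous_id).continuousOn
    ⟨sub_nonpos.2 (hσp b).2, sub_nonneg.2 (hσp a).1⟩
  refine ⟨p t, ?_⟩
  rw [show σ (p t) = t from sub_eq_zero.1 ht, hp]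

section Box

variable {ι : Type*} {lo hi : ι → ℝ}

noncomputable def projBox (h : lo ≤ hi) (y : ι → ℝ) : ι → ℝ :=
  fun i => projIcc (lo i) (hi i) (h i) (y i)

theorem projBox_mem (h : lo ≤ hi) (y : ι → ℝ) : projBox h y ∈ Icc lo hi :=
  ⟨fun i => (projIcc (lo i) (hi i) (h i) (y i)).2.1,
    fun i => (projIcc (lo i) (hi i) (h i) (y i)).2.2⟩

theorem projBox_of_mem (h : lo ≤ hi) {y : ι → ℝ} (hy : y ∈ Icc lo hi) : projBox h y = y :=
  funext fun i => congrArg Subtype.val (projIcc_of_mem (h i) ⟨hy.1 i, hy.2 i⟩)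

variable [Fintype ι]

theorem lipschitzWith_projBox (h : lo ≤ hi) : LipschitzWith 1 (projBox h) := by
  refine LipschitzWith.of_dist_le_mul fun y z => (dist_pi_le_iff (by positivity)).2 fun i => ?_
  calc dist (projBox h y i) (projBox h z i)
      = dist (projIcc (lo i) (hi i) (h i) (y i)) (projIcc (lo i) (hi i) (h i) (z i)) := rfl
    _ ≤ 1 * dist (y i) (z i) := (LipschitzWith.projIcc (h i)).dist_le_mul _ _
    _ ≤ 1 * dist y z := by gcongr; exact dist_le_pi_dist y z i

variable {F : (ι → ℝ) → ℝ → ι → ℝ} {L : ℝ≥0} {σ : (ι → ℝ) → ℝ}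

theorem exists_eq_projBox_smul (h : lo ≤ hi) (hFx : ∀ t, LipschitzWith 1 (F · t))
    (hFt : ∀ x, LipschitzWith L (F x)) (hσ : Continuous σ) {γ : ℝ} (hγ : |γ| < 1) :
    ∃ x, x = projBox h (γ • F x (σ x)) := by
  obtain ⟨a, ha⟩ := (isCompact_Icc.image_of_continuousOn hσ.continuousOn).bddBelow
  obtain ⟨b, hb⟩ := (isCompact_Icc.image_of_continuousOn hσ.continuousOn).bddAbove
  have hcontr : ∀ t, ContractingWith (1 * (‖γ‖₊ * 1)) (fun x => projBox h (γ • F x t)) :=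
    fun t => ⟨by simpa [← NNReal.coe_lt_one] using hγ,
      (lipschitzWith_projBox h).comp ((lipschitzWith_smul γ).comp (hFx t))⟩
  obtain ⟨x, hx⟩ := exists_fixedPoint_of_contractingWith_of_lipschitzWith hcontr
    (fun x => (lipschitzWith_projBox h).comp ((lipschitzWith_smul γ).comp (hFt x))) hσ
    (a := a) (b := b) fun t x =>
      ⟨ha (mem_image_of_mem σ (projBox_mem h _)), hb (mem_image_of_mem σ (projBox_mem h _))⟩
  exact ⟨x, hx.symm⟩

theorem exists_fixedPoint_Icc_of_lipschitzWith (h : lo ≤ hi)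
    (hFx : ∀ t, LipschitzWith 1 (F · t)) (hFt : ∀ x, LipschitzWith L (F x))
    (hσ : Continuous σ) (hmaps : ∀ x ∈ Icc lo hi, F x (σ x) ∈ Icc lo hi) :
    ∃ x ∈ Icc lo hi, F x (σ x) = x := by
  set T : (ι → ℝ) → ι → ℝ := fun x => F x (σ x)
  have hT : Continuous T :=
    (LipschitzWith.uncurry hFx hFt).continuous.comp (continuous_id.prodMk hσ)
  obtain ⟨R, hR, hTR⟩ := isCompact_Icc.isBounded.exists_pos_norm_le (s := Icc lo hi)
  obtain ⟨x, hx, hfix⟩ := isCompact_Icc.exists_fixedPoint_of_forall_dist_le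
    ((lipschitzWith_projBox h).continuous.comp hT).continuousOn fun δ hδ => by
      set γ := max 0 (1 - δ / R)
      have hγ : |γ| < 1 := by
        rw [abs_of_nonneg (le_max_left _ _)]
        exact max_lt one_pos (by linarith [div_pos hδ hR])
      obtain ⟨x, hx⟩ := exists_eq_projBox_smul h hFx hFt hσ hγ
      have hxbox : x ∈ Icc lo hi := hx ▸ projBox_mem h _
      refine ⟨x, hxbox, ?_⟩
      calc dist (projBox h (T x)) x
          ≤ dist (T x) (γ • T x) := by
            nth_rewrite 2 [hx]
            simpa using (lipschitzWith_projBox h).dist_le_mul (T x) (γ • T x)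
        _ = |1 - γ| * ‖T x‖ := by
            rw [dist_eq_norm, ← Real.norm_eq_abs, ← norm_smul, sub_smul, one_smul]
        _ ≤ δ / R * R := by
            rw [abs_of_nonneg (by linarith [abs_lt.1 hγ])]
            exact mul_le_mul (by linarith [le_max_right 0 (1 - δ / R)]) (hTR _ (hmaps x hxbox))
              (norm_nonneg _) (by positivity)
        _ = δ := div_mul_cancel₀ δ hR.ne'
  exact ⟨x, hx, by rwa [Function.comp_apply, projBox_of_mem h (hmaps x hx)] at hfix⟩

end Box

section InflatedBonus

variable {S : Type*} [Fintype S]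

theorem abs_sum_mul_sub_sum_mul_le {p : S → ℝ} (hp : ∀ s, 0 ≤ p s) (hp1 : ∑ s, p s ≤ 1)
    (x y : S → ℝ) : |∑ s, p s * x s - ∑ s, p s * y s| ≤ dist x y :=
  calc |∑ s, p s * x s - ∑ s, p s * y s|
      = |∑ s, p s * (x s - y s)| := by simp only [mul_sub, Finset.sum_sub_distrib]
    _ ≤ ∑ s, p s * dist x y := by
        refine (Finset.abs_sum_le_sum_abs _ _).trans (Finset.sum_le_sum fun s _ => ?_)
        rw [abs_mul, abs_of_nonneg (hp s), ← Real.dist_eq]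
        exact mul_le_mul_of_nonneg_left (dist_le_pi_dist x y s) (hp s)
    _ ≤ dist x y := by
        rw [← Finset.sum_mul]
        exact mul_le_of_le_one_left dist_nonneg hp1

theorem sum_mul_le_sum_mul_add_mul_ciSup [Nonempty S] {p q x : S → ℝ} {r : ℝ}
    (hx : ∀ s, 0 ≤ x s) (hqp : ∑ s, |q s - p s| ≤ r) :
    ∑ s, p s * x s ≤ ∑ s, q s * x s + r * ⨆ s, x s := by
  have hle : ∀ s, x s ≤ ⨆ s, x s := le_ciSup (Finite.bddAbove_range x)
  have hsup : 0 ≤ ⨆ s, x s := (hx (Classical.arbitrary S)).trans (hle _)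
  have : ∑ s, (p s - q s) * x s ≤ (∑ s, |q s - p s|) * ⨆ s, x s := by
    rw [Finset.sum_mul]
    refine Finset.sum_le_sum fun s _ => ?_
    calc (p s - q s) * x s ≤ |q s - p s| * x s :=
          mul_le_mul_of_nonneg_right (abs_sub_comm (q s) (p s) ▸ le_abs_self _) (hx s)
      _ ≤ |q s - p s| * ⨆ s, x s := mul_le_mul_of_nonneg_left (hle s) (abs_nonneg _)
  simp only [sub_mul, Finset.sum_sub_distrib] at this
  linarith [mul_le_mul_of_nonneg_right hqp hsup]

/-- Its `sInf` is the paper's `P̂ J + CB_min(J)`. -/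
def robustExpectations (p : S → ℝ) (r : ℝ) (J : S → ℝ) : Set ℝ :=
  {v | ∃ q : S → ℝ, (∀ s, 0 ≤ q s) ∧ (∑ s, q s) ≤ 1 ∧ (∑ s, |q s - p s|) ≤ r ∧
    v = ∑ s, q s * J s}

theorem sInf_robustExpectations_nonneg {p J : S → ℝ} {r : ℝ} (hJ : ∀ s, 0 ≤ J s) :
    0 ≤ sInf (robustExpectations p r J) :=
  Real.sInf_nonneg fun _ ⟨_, hq, _, _, hv⟩ =>
    hv ▸ Finset.sum_nonneg fun s _ => mul_nonneg (hq s) (hJ s)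

theorem max_sub_le_sInf_robustExpectations [Nonempty S] {p x J : S → ℝ} {r : ℝ}
    (hp : ∀ s, 0 ≤ p s) (hp1 : ∑ s, p s ≤ 1) (hr : 0 ≤ r) (hx : ∀ s, 0 ≤ x s)
    (hxJ : ∀ s, x s ≤ J s) :
    max (∑ s, p s * x s - r * ⨆ s, x s) 0 ≤ sInf (robustExpectations p r J) := by
  refine le_csInf ⟨_, p, hp, hp1, by simpa using hr, rfl⟩ fun v ⟨q, hq, _, hqp, hv⟩ => ?_
  have hqxJ : ∑ s, q s * x s ≤ ∑ s, q s * J s :=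
    Finset.sum_le_sum fun s _ => mul_le_mul_of_nonneg_left (hxJ s) (hq s)
  subst hv
  refine max_le ?_ ((Finset.sum_nonneg fun s _ => mul_nonneg (hq s) (hx s)).trans hqxJ)
  linarith [sum_mul_le_sum_mul_add_mul_ciSup hx hqp]

variable {A : S → Type*} [∀ s, Fintype (A s)] [∀ s, Nonempty (A s)]

/-- `Û^{†,0}` with the maximum of `x` in the exploration bonus replaced by a free parameter `t`. -/
noncomputable def inflatedBonusOp (c : ∀ s, A s → ℝ) (P : ∀ s, A s → S → ℝ) (ε : ∀ s, A s → ℝ)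
    (x : S → ℝ) (t : ℝ) : S → ℝ :=
  fun s => ⨅ a, (c s a + max ((∑ s', P s a s' * x s') - ε s a * t) 0)

variable {c : ∀ s, A s → ℝ} {P : ∀ s, A s → S → ℝ} {ε : ∀ s, A s → ℝ}

theorem dist_inflatedBonusOp_le {x y : S → ℝ} {t u δ : ℝ} (hδ : 0 ≤ δ)
    (h : ∀ s a, |(∑ s', P s a s' * x s' - ε s a * t) - (∑ s', P s a s' * y s' - ε s a * u)| ≤ δ) :
    dist (inflatedBonusOp c P ε x t) (inflatedBonusOp c P ε y u) ≤ δ :=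
  (dist_pi_le_iff hδ).2 fun s => abs_ciInf_sub_ciInf_le fun a => by
    rw [add_sub_add_left_eq_sub]
    exact (abs_max_sub_max_le_abs _ _ _).trans (h s a)

theorem lipschitzWith_inflatedBonusOp_left (hP : ∀ s a s', 0 ≤ P s a s')
    (hP1 : ∀ s a, ∑ s', P s a s' ≤ 1) (t : ℝ) :
    LipschitzWith 1 (inflatedBonusOp c P ε · t) :=
  LipschitzWith.of_dist_le_mul fun x y => by
    rw [NNReal.coe_one, one_mul]
    exact dist_inflatedBonusOp_le dist_nonneg fun s a => by
      simpa using abs_sum_mul_sub_sum_mul_le (hP s a) (hP1 s a) x y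

theorem lipschitzWith_inflatedBonusOp_right {L : ℝ≥0} (hL : ∀ s a, |ε s a| ≤ L) (x : S → ℝ) :
    LipschitzWith L (inflatedBonusOp c P ε x) :=
  LipschitzWith.of_dist_le_mul fun t u => by
    refine dist_inflatedBonusOp_le (by positivity) fun s a => ?_
    rw [sub_sub_sub_cancel_left, ← mul_sub, abs_mul, Real.dist_eq, abs_sub_comm]
    exact mul_le_mul_of_nonneg_right (hL s a) (abs_nonneg _)

theorem inflatedBonusOp_ciSup_mem_Icc [Nonempty S] {J : S → ℝ} (hc : ∀ s a, 0 ≤ c s a)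
    (hP : ∀ s a s', 0 ≤ P s a s') (hP1 : ∀ s a, ∑ s', P s a s' ≤ 1) (hε : ∀ s a, 0 ≤ ε s a)
    (hJ : ∀ s, J s = ⨅ a, (c s a + sInf (robustExpectations (P s a) (ε s a) J)))
    {x : S → ℝ} (hx : x ∈ Icc (fun s => ⨅ a, c s a) J) :
    inflatedBonusOp c P ε x (⨆ s, x s) ∈ Icc (fun s => ⨅ a, c s a) J := by
  have hx0 : ∀ s, 0 ≤ x s := fun s => (le_ciInf (hc s)).trans (hx.1 s)
  refine ⟨fun s => ciInf_mono (Finite.bddBelow_range _) fun a => ?_,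
    fun s => hJ s ▸ ciInf_mono (Finite.bddBelow_range _) fun a => ?_⟩
  · exact le_add_of_nonneg_right (le_max_right _ _)
  · exact (add_le_add_iff_left _).2 (max_sub_le_sInf_robustExpectations (hP s a) (hP1 s a)
      (hε s a) hx0 hx.2)

end InflatedBonus

theorem stmt_10 (N : ℕ) (hN : 0 < N) (A : Fin N → Type)
    [∀ s, Fintype (A s)] [∀ s, Nonempty (A s)]
    (c : ∀ s, A s → ℝ) (hc : ∀ s a, 0 ≤ c s a)
    (Phat : ∀ s, A s → Fin N → ℝ)
    (hP_nonneg : ∀ s a s', 0 ≤ Phat s a s')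
    (hP_sub : ∀ s a, ∑ s', Phat s a s' ≤ 1)
    (ε : ∀ s, A s → ℝ) (hε : ∀ s a, 0 ≤ ε s a)
    (Jhat : Fin N → ℝ) (hJ_nonneg : ∀ s, 0 ≤ Jhat s)
    (hJhat : ∀ s, Jhat s = ⨅ a, (c s a +
      sInf {v : ℝ | ∃ Ptil : Fin N → ℝ, (∀ s', 0 ≤ Ptil s') ∧ (∑ s', Ptil s') ≤ 1 ∧
        (∑ s', |Ptil s' - Phat s a s'|) ≤ ε s a ∧ v = ∑ s', Ptil s' * Jhat s'})) :
    ∃ x : Fin N → ℝ,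
      (∀ s, x s = ⨅ a,
        (c s a + max ((∑ s', Phat s a s' * x s') - ε s a * (⨆ s'', x s'')) 0)) ∧
      (∀ s, (⨅ a, c s a) ≤ x s ∧ x s ≤ Jhat s) := by
  have : Nonempty (Fin N) := Fin.pos_iff_nonempty.mp hN
  obtain ⟨M, hM⟩ := Finite.bddAbove_range fun p : (Σ s, A s) => |ε p.1 p.2|
  have hL : ∀ s a, |ε s a| ≤ M.toNNReal :=
    fun s a => (hM (mem_range_self ⟨s, a⟩)).trans (Real.le_coe_toNNReal M)
  have hlo : (fun s => ⨅ a, c s a) ≤ Jhat := fun s => hJhat s ▸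
    ciInf_mono (Finite.bddBelow_range _) fun a =>
      le_add_of_nonneg_right (sInf_robustExpectations_nonneg hJ_nonneg)
  obtain ⟨x, hx, hfix⟩ := exists_fixedPoint_Icc_of_lipschitzWith hlo
    (lipschitzWith_inflatedBonusOp_left hP_nonneg hP_sub) (lipschitzWith_inflatedBonusOp_right hL)
    continuous_ciSup_apply fun x hx => inflatedBonusOp_ciSup_mem_Icc hc hP_nonneg hP_sub hε hJhat hx
  exact ⟨x, fun s => (congrFun hfix s).symm, fun s => ⟨hx.1 s, hx.2 s⟩⟩
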